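/- Let g, ĝ, (h_i)_{i∈ψ} and (ĥ_i)_{i∈φ} all be mutually independent random variables, each exponentially distributed with rate 1, where ψ is a nonempty finite index set and φ ⊆ ψ is nonempty. Fix r>0, α≥2, distances d_i>0, and N≥0, and set η = g r^{-α}/(N + Σ_{i∈ψ} h_i d_i^{-α}) and η̂ = ĝ r^{-α}/(N + Σ_{i∈φ} ĥ_i d_i^{-α}). Define CP1(x) = e^{-x r^α N} ∏_{i∈ψ}(1+x r^α d_i^{-α})^{-1} and CP3(x) = e^{-x r^α N} ∏_{i∈φ}(1+x r^α d_i^{-α})^{-1}. Then for all T ≥ 0 and S_th ≥ 0, the FFR coverage probability satisfies P( (η > S_th and η > T) or (η ≤ S_th and η̂ > T) ) = CP1(max(T, S_th)) + CP3(T) − CP3(T)·CP1(S_th). -/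

import Mathlib

/-!
With Rayleigh fading the desired power `g` is `Exp(1)` and independent of the interference, so
`P(η > x) = P(x rᵅ (N + ∑ hᵢ dᵢ^(-α)) < g) = E[exp (-x rᵅ (N + ∑ hᵢ dᵢ^(-α)))]`, which factors over
the independent interferers into `e^(-x rᵅ N) ∏ (1 + x rᵅ dᵢ^(-α))⁻¹`, since the Laplace transform
of `Exp(1)` is `b ↦ (1 + b)⁻¹`. The coverage event is the disjoint union of `{max T S_th < η}` and
`{η ≤ S_th} ∩ {T < η̂}`, and `η`, `η̂` are independent because they are functions of disjoint
sub-families of the fading variables.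
-/

open MeasureTheory ProbabilityTheory Real Set
open scoped ENNReal

/-- FR1 coverage probability at threshold `x`. -/
noncomputable def CP1 {ι : Type*} [Fintype ι] (d : ι → ℝ) (r α N x : ℝ) : ℝ :=
  Real.exp (-(x * r ^ α * N)) * ∏ i, (1 + x * r ^ α * d i ^ (-α))⁻¹

/-- FR3 coverage probability (interferer set `φ`) at threshold `x`. -/
noncomputable def CP3 {ι : Type*} (φ : Finset ι) (d : ι → ℝ) (r α N x : ℝ) : ℝ :=
  Real.exp (-(x * r ^ α * N)) * ∏ i ∈ φ, (1 + x * r ^ α * d i ^ (-α))⁻¹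

section ExponentialDistribution

variable {r : ℝ}

lemma expMeasure_Iic_zero (hr : 0 < r) : expMeasure r (Iic 0) = 0 := by
  have := isProbabilityMeasure_expMeasure hr
  rw [← ofReal_cdf, cdf_expMeasure_eq hr, if_pos le_rfl]
  simp

lemma expMeasure_Ioi (hr : 0 < r) {v : ℝ} (hv : 0 ≤ v) :
    expMeasure r (Ioi v) = ENNReal.ofReal (exp (-(r * v))) := by
  have := isProbabilityMeasure_expMeasure hr
  have hexp : exp (-(r * v)) ≤ 1 := exp_le_one_iff.2 (neg_nonpos.2 (mul_nonneg hr.le hv))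
  rw [← compl_Iic, prob_compl_eq_one_sub measurableSet_Iic, ← ofReal_cdf, cdf_expMeasure_eq hr,
    if_pos hv, ← ENNReal.ofReal_one, ← ENNReal.ofReal_sub _ (by linarith), sub_sub_cancel]

lemma lintegral_exp_neg_mul_expMeasure (hr : 0 < r) {b : ℝ} (hb : 0 ≤ b) :
    ∫⁻ y, ENNReal.ofReal (exp (-(b * y))) ∂expMeasure r = ENNReal.ofReal (r / (r + b)) := by
  have hrb : 0 < r + b := by linarith
  -- exponential tilting turns the density of `Exp(r)` into a multiple of that of `Exp(r + b)`
  have htilt : ∀ y, exponentialPDF r y * ENNReal.ofReal (exp (-(b * y)))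
      = ENNReal.ofReal (r / (r + b)) * exponentialPDF (r + b) y := by
    intro y
    rcases le_or_gt 0 y with hy | hy
    · rw [exponentialPDF_of_nonneg hy, exponentialPDF_of_nonneg hy,
        ← ENNReal.ofReal_mul (by positivity), ← ENNReal.ofReal_mul (by positivity)]
      congr 1
      rw [mul_assoc, ← exp_add, ← mul_assoc, div_mul_cancel₀ _ hrb.ne']
      ring_nf
    · simp [exponentialPDF_of_neg hy]
  have hpdf : Measurable (exponentialPDF r) := (measurable_exponentialPDFReal r).ennreal_ofReal
  have hpdf' : Measurable (exponentialPDF (r + b)) :=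
    (measurable_exponentialPDFReal (r + b)).ennreal_ofReal
  calc ∫⁻ y, ENNReal.ofReal (exp (-(b * y))) ∂expMeasure r
      = ∫⁻ y, exponentialPDF r y * ENNReal.ofReal (exp (-(b * y))) :=
        lintegral_withDensity_eq_lintegral_mul _ hpdf (by fun_prop)
    _ = ENNReal.ofReal (r / (r + b)) * ∫⁻ y, exponentialPDF (r + b) y := by
        simp only [htilt]
        exact lintegral_const_mul _ hpdf'
    _ = ENNReal.ofReal (r / (r + b)) := by rw [lintegral_exponentialPDF_eq_one hrb, mul_one]

end ExponentialDistribution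

section Independence

variable {Ω κ β : Type*} [mβ : MeasurableSpace β] {X : κ → Ω → β}

lemma measurable_iSup_comap_of_mem {S : Set κ} {k : κ} (hk : k ∈ S) :
    Measurable[⨆ j ∈ S, mβ.comap (X j)] (X k) :=
  Measurable.of_comap_le (le_iSup₂ (f := fun j (_ : j ∈ S) => mβ.comap (X j)) k hk)

lemma ProbabilityTheory.iIndepFun.indepFun_of_measurable_iSup [MeasurableSpace Ω]
    {μ : Measure Ω} {γ δ : Type*} [MeasurableSpace γ] [MeasurableSpace δ] (hX : iIndepFun X μ)
    (hXm : ∀ k, Measurable (X k)) {S T : Set κ} (hST : Disjoint S T)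
    {F : Ω → γ} {G : Ω → δ} (hF : Measurable[⨆ k ∈ S, mβ.comap (X k)] F)
    (hG : Measurable[⨆ k ∈ T, mβ.comap (X k)] G) : IndepFun F G μ := by
  rw [IndepFun_iff_Indep]
  exact indep_of_indep_of_le (indep_iSup_of_disjoint (fun k => (hXm k).comap_le) hX.iIndep hST)
    hF.comap_le hG.comap_le

lemma ProbabilityTheory.iIndepFun.indepFun_pi_of_notMem [MeasurableSpace Ω] {μ : Measure Ω}
    {ι : Type*} (hX : iIndepFun X μ) (hXm : ∀ k, Measurable (X k)) (u : ι → κ) {k : κ}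
    (hk : k ∉ range u) :
    IndepFun (fun ω i => X (u i) ω) (X k) μ :=
  hX.indepFun_of_measurable_iSup hXm (disjoint_singleton_right.2 hk)
    (@measurable_pi_lambda _ _ _ (⨆ j ∈ range u, mβ.comap (X j)) _ _
      fun i => measurable_iSup_comap_of_mem (mem_range_self i))
    (measurable_iSup_comap_of_mem rfl)

end Independence

section ExponentialFading

variable {Ω : Type*} [MeasurableSpace Ω] {μ : Measure Ω} {r : ℝ}

lemma ae_pos_of_map_eq_expMeasure (hr : 0 < r) {Y : Ω → ℝ} (hYm : Measurable Y)
    (hY : μ.map Y = expMeasure r) : ∀ᵐ ω ∂μ, 0 < Y ω := by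
  rw [ae_iff]
  simp only [not_lt]
  change μ (Y ⁻¹' Iic 0) = 0
  rw [← Measure.map_apply hYm measurableSet_Iic, hY, expMeasure_Iic_zero hr]

lemma measure_lt_eq_lintegral_exp_of_indepFun [IsProbabilityMeasure μ] (hr : 0 < r)
    {V G : Ω → ℝ} (hVm : Measurable V) (hGm : Measurable G) (hG : μ.map G = expMeasure r)
    (hV : ∀ᵐ ω ∂μ, 0 ≤ V ω) (hVG : IndepFun V G μ) :
    μ {ω | V ω < G ω} = ∫⁻ ω, ENNReal.ofReal (exp (-(r * V ω))) ∂μ := by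
  have hS : MeasurableSet {p : ℝ × ℝ | p.1 < p.2} := measurableSet_lt measurable_fst measurable_snd
  have hV' : ∀ᵐ v ∂μ.map V, 0 ≤ v := (ae_map_iff hVm.aemeasurable measurableSet_Ici).2 hV
  calc μ {ω | V ω < G ω}
      = (μ.map V).prod (μ.map G) {p : ℝ × ℝ | p.1 < p.2} := by
        rw [← (indepFun_iff_map_prod_eq_prod_map_map hVm.aemeasurable hGm.aemeasurable).1 hVG,
          Measure.map_apply (hVm.prodMk hGm) hS]
        rfl
    _ = ∫⁻ v, expMeasure r (Ioi v) ∂μ.map V := by rw [Measure.prod_apply hS, hG]; rfl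
    _ = ∫⁻ v, ENNReal.ofReal (exp (-(r * v))) ∂μ.map V :=
        lintegral_congr_ae (hV'.mono fun v hv => expMeasure_Ioi hr hv)
    _ = ∫⁻ ω, ENNReal.ofReal (exp (-(r * V ω))) ∂μ := lintegral_map (by fun_prop) hVm

lemma lintegral_exp_neg_add_sum {ι : Type*} [Fintype ι] (hr : 0 < r) {Y : ι → Ω → ℝ}
    (hYm : ∀ i, Measurable (Y i)) (hY : ∀ i, μ.map (Y i) = expMeasure r) (hYi : iIndepFun Y μ)
    {b : ι → ℝ} (hb : ∀ i, 0 ≤ b i) (a : ℝ) :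
    ∫⁻ ω, ENNReal.ofReal (exp (-(a + ∑ i, b i * Y i ω))) ∂μ
      = ENNReal.ofReal (exp (-a) * ∏ i, r / (r + b i)) := by
  have hfactor : ∀ ω, ENNReal.ofReal (exp (-(a + ∑ i, b i * Y i ω)))
      = ENNReal.ofReal (exp (-a)) * ∏ i, ENNReal.ofReal (exp (-(b i * Y i ω))) := by
    intro ω
    rw [neg_add, exp_add, ENNReal.ofReal_mul (exp_nonneg _), ← Finset.sum_neg_distrib, exp_sum,
      ENNReal.ofReal_prod_of_nonneg fun i _ => exp_nonneg _]
  have hZm : ∀ i, Measurable fun ω => ENNReal.ofReal (exp (-(b i * Y i ω))) :=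
    fun i => by fun_prop
  have hZi : iIndepFun (fun i ω => ENNReal.ofReal (exp (-(b i * Y i ω)))) μ :=
    hYi.comp (fun i y => ENNReal.ofReal (exp (-(b i * y)))) fun i => by fun_prop
  have hLaplace : ∀ i, ∫⁻ ω, ENNReal.ofReal (exp (-(b i * Y i ω))) ∂μ
      = ENNReal.ofReal (r / (r + b i)) := fun i => by
    rw [← lintegral_map (f := fun y => ENNReal.ofReal (exp (-(b i * y)))) (by fun_prop) (hYm i),
      hY i, lintegral_exp_neg_mul_expMeasure hr (hb i)]
  simp only [hfactor]
  rw [lintegral_const_mul _ (Finset.measurable_prod _ fun i _ => hZm i),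
    lintegral_prod_eq_prod_lintegral_of_indepFun _ _ hZi hZm, ENNReal.ofReal_mul (exp_nonneg _),
    ENNReal.ofReal_prod_of_nonneg fun i _ => by have := hb i; positivity]
  simp only [hLaplace]

theorem measureReal_coverage_of_exp_fading [IsProbabilityMeasure μ] {ι : Type*} [Fintype ι]
    [Nonempty ι] {G : Ω → ℝ} {Y : ι → Ω → ℝ} (hGm : Measurable G) (hYm : ∀ i, Measurable (Y i))
    (hG : μ.map G = expMeasure 1) (hY : ∀ i, μ.map (Y i) = expMeasure 1) (hYi : iIndepFun Y μ)
    (hYG : IndepFun (fun ω i => Y i ω) G μ) {c N : ℝ} (hc : 0 < c) (hN : 0 ≤ N) {w : ι → ℝ}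
    (hw : ∀ i, 0 < w i) {x : ℝ} (hx : 0 ≤ x) :
    μ.real {ω | x < G ω * c⁻¹ / (N + ∑ i, Y i ω * w i)}
      = exp (-(x * c * N)) * ∏ i, (1 + x * c * w i)⁻¹ := by
  set V : Ω → ℝ := fun ω => x * c * N + ∑ i, x * c * w i * Y i ω with hV
  have hYpos : ∀ᵐ ω ∂μ, ∀ i, 0 < Y i ω :=
    ae_all_iff.2 fun i => ae_pos_of_map_eq_expMeasure one_pos (hYm i) (hY i)
  have hevent : {ω | x < G ω * c⁻¹ / (N + ∑ i, Y i ω * w i)} =ᵐ[μ] {ω | V ω < G ω} := by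
    refine Filter.eventuallyEq_set.2 (hYpos.mono fun ω hω => ?_)
    have hD : 0 < c * (N + ∑ i, Y i ω * w i) :=
      mul_pos hc (add_pos_of_nonneg_of_pos hN
        (Finset.sum_pos (fun i _ => mul_pos (hω i) (hw i)) Finset.univ_nonempty))
    have hVω : x * (c * (N + ∑ i, Y i ω * w i)) = V ω := by
      simp only [hV, mul_add, Finset.mul_sum, ← mul_assoc]
      congr 1
      exact Finset.sum_congr rfl fun i _ => by ring
    change x < G ω * c⁻¹ / _ ↔ V ω < G ω
    rw [← div_eq_mul_inv, div_div, lt_div_iff₀ hD, hVω]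
  have hV0 : ∀ᵐ ω ∂μ, 0 ≤ V ω := hYpos.mono fun ω hω =>
    add_nonneg (by positivity) (Finset.sum_nonneg fun i _ => by
      have := hw i; have := hω i; positivity)
  have hVG : IndepFun V G μ := hYG.comp (φ := fun y : ι → ℝ => x * c * N + ∑ i, x * c * w i * y i)
    (by fun_prop) measurable_id
  rw [measureReal_def, measure_congr hevent,
    measure_lt_eq_lintegral_exp_of_indepFun one_pos (by fun_prop) hGm hG hV0 hVG]
  simp only [one_mul, hV]
  rw [lintegral_exp_neg_add_sum one_pos hYm hY hYi (fun i => by have := hw i; positivity),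
    ENNReal.toReal_ofReal (mul_nonneg (exp_nonneg _)
      (Finset.prod_nonneg fun i _ => by have := hw i; positivity))]
  simp only [one_div]

theorem measureReal_coverage_eq_CP3 [IsProbabilityMeasure μ] {ι : Type*} {s : Finset ι}
    (hs : s.Nonempty) {G : Ω → ℝ} {Y : ι → Ω → ℝ} (hGm : Measurable G)
    (hYm : ∀ i ∈ s, Measurable (Y i)) (hG : μ.map G = expMeasure 1)
    (hY : ∀ i ∈ s, μ.map (Y i) = expMeasure 1) (hYi : iIndepFun (fun i : s => Y i) μ)
    (hYG : IndepFun (fun ω (i : s) => Y i ω) G μ) {r α N : ℝ} (hr : 0 < r) (hN : 0 ≤ N)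
    {d : ι → ℝ} (hd : ∀ i ∈ s, 0 < d i) {x : ℝ} (hx : 0 ≤ x) :
    μ.real {ω | x < G ω * r ^ (-α) / (N + ∑ i ∈ s, Y i ω * d i ^ (-α))} = CP3 s d r α N x := by
  have := hs.to_subtype
  rw [rpow_neg hr.le, CP3, ← Finset.prod_coe_sort s]
  simp only [← Finset.sum_coe_sort s]
  exact measureReal_coverage_of_exp_fading (Y := fun i : s => Y i) hGm (fun i => hYm i i.2) hG
    (fun i => hY i i.2) hYi hYG (rpow_pos_of_pos hr α) hN (fun i => rpow_pos_of_pos (hd i i.2) _)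
    hx

end ExponentialFading

lemma measureReal_ffr_coverage {Ω : Type*} [MeasurableSpace Ω] {μ : Measure Ω}
    [IsProbabilityMeasure μ] {η η' : Ω → ℝ} (hη : Measurable η) (hη' : Measurable η')
    (hind : IndepFun η η' μ) (T S : ℝ) :
    μ.real {ω | (S < η ω ∧ T < η ω) ∨ (η ω ≤ S ∧ T < η' ω)}
      = μ.real {ω | max T S < η ω} + (1 - μ.real {ω | S < η ω}) * μ.real {ω | T < η' ω} := by
  have hsplit : {ω | (S < η ω ∧ T < η ω) ∨ (η ω ≤ S ∧ T < η' ω)}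
      = {ω | max T S < η ω} ∪ (η ⁻¹' Iic S ∩ η' ⁻¹' Ioi T) := by
    ext ω
    simp only [mem_ofPred_eq, mem_union, mem_inter_iff, mem_preimage, mem_Iic, mem_Ioi, max_lt_iff]
    tauto
  have hdisj : Disjoint {ω | max T S < η ω} (η ⁻¹' Iic S ∩ η' ⁻¹' Ioi T) :=
    disjoint_left.2 fun ω h₁ h₂ => not_lt.2 (show η ω ≤ S from h₂.1) (max_lt_iff.1 h₁).2
  have hcompl : η ⁻¹' Iic S = {ω | S < η ω}ᶜ := by ext ω; simp
  have hinter : μ.real (η ⁻¹' Iic S ∩ η' ⁻¹' Ioi T)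
      = μ.real (η ⁻¹' Iic S) * μ.real (η' ⁻¹' Ioi T) := by
    simp only [measureReal_def, ENNReal.toReal_mul,
      hind.measure_inter_preimage_eq_mul _ _ measurableSet_Iic measurableSet_Ioi]
  rw [hsplit, measureReal_union hdisj ((hη measurableSet_Iic).inter (hη' measurableSet_Ioi)),
    hinter, hcompl, probReal_compl_eq_one_sub (measurableSet_lt measurable_const hη)]
  rfl

theorem FFR_coverage_probability_uncorrelated_general
    {Ω : Type*} [MeasurableSpace Ω] (μ : Measure Ω) [IsProbabilityMeasure μ]
    {ι : Type*} [Fintype ι] [Nonempty ι]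
    (φ : Finset ι) (hφ : φ.Nonempty)
    (g ghat : Ω → ℝ) (h hhat : ι → Ω → ℝ)
    (hg_meas : Measurable g) (hghat_meas : Measurable ghat)
    (hh_meas : ∀ i, Measurable (h i)) (hhhat_meas : ∀ i, Measurable (hhat i))
    (hg_exp : Measure.map g μ = expMeasure 1)
    (hghat_exp : Measure.map ghat μ = expMeasure 1)
    (hh_exp : ∀ i, Measure.map (h i) μ = expMeasure 1)
    (hhhat_exp : ∀ i ∈ φ, Measure.map (hhat i) μ = expMeasure 1)
    (h_indep : iIndepFun
      (fun x : Bool ⊕ ι ⊕ {i // i ∈ φ} =>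
        Sum.elim (fun b => if b then ghat else g)
          (Sum.elim h (fun i => hhat i.1)) x) μ)
    (r α N : ℝ) (hr : 0 < r) (hN : 0 ≤ N)
    (d : ι → ℝ) (hd : ∀ i, 0 < d i)
    (T Sth : ℝ) (hT : 0 ≤ T) (hSth : 0 ≤ Sth) :
    (μ {ω | (Sth < g ω * r ^ (-α) / (N + ∑ i, h i ω * d i ^ (-α)) ∧
               T < g ω * r ^ (-α) / (N + ∑ i, h i ω * d i ^ (-α))) ∨
             (g ω * r ^ (-α) / (N + ∑ i, h i ω * d i ^ (-α)) ≤ Sth ∧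
               T < ghat ω * r ^ (-α) / (N + ∑ i ∈ φ, hhat i ω * d i ^ (-α)))}).toReal
      = CP1 d r α N (max T Sth) + CP3 φ d r α N T
          - CP3 φ d r α N T * CP1 d r α N Sth := by
  set X : Bool ⊕ ι ⊕ φ → Ω → ℝ := fun k =>
    Sum.elim (fun b => if b then ghat else g) (Sum.elim h fun i => hhat i.1) k
  have hXm : ∀ k, Measurable (X k) := by
    rintro ((_ | _) | i | i)
    exacts [hg_meas, hghat_meas, hh_meas i, hhhat_meas i]
  have hmem : ∀ {S : Set (Bool ⊕ ι ⊕ φ)} (k), k ∈ S →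
      Measurable[⨆ j ∈ S, MeasurableSpace.comap (X j) inferInstance] (X k) :=
    fun _ hk => measurable_iSup_comap_of_mem hk
  have hP1 : ∀ x, 0 ≤ x →
      μ.real {ω | x < g ω * r ^ (-α) / (N + ∑ i, h i ω * d i ^ (-α))} = CP1 d r α N x :=
    fun x hx => measureReal_coverage_eq_CP3 Finset.univ_nonempty hg_meas (fun i _ => hh_meas i)
      hg_exp (fun i _ => hh_exp i)
      (h_indep.precomp (g := Sum.inr ∘ Sum.inl ∘ Subtype.val)
        (Sum.inr_injective.comp (Sum.inl_injective.comp Subtype.val_injective)))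
      (h_indep.indepFun_pi_of_notMem hXm (Sum.inr ∘ Sum.inl ∘ Subtype.val) (k := Sum.inl false)
        (by simp))
      hr hN (fun i _ => hd i) hx
  have hP3 := measureReal_coverage_eq_CP3 (α := α) hφ hghat_meas (fun i _ => hhhat_meas i) hghat_exp
    hhhat_exp (h_indep.precomp (g := Sum.inr ∘ Sum.inr) (Sum.inr_injective.comp Sum.inr_injective))
    (h_indep.indepFun_pi_of_notMem hXm (Sum.inr ∘ Sum.inr) (k := Sum.inl true) (by simp))
    hr hN (fun i _ => hd i) hT
  have hind : IndepFun (fun ω => g ω * r ^ (-α) / (N + ∑ i, h i ω * d i ^ (-α)))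
      (fun ω => ghat ω * r ^ (-α) / (N + ∑ i ∈ φ, hhat i ω * d i ^ (-α))) μ :=
    h_indep.indepFun_of_measurable_iSup hXm (S := {Sum.inl false} ∪ range (Sum.inr ∘ Sum.inl))
      (T := {Sum.inl true} ∪ range (Sum.inr ∘ Sum.inr)) (by simp [disjoint_left])
      (((hmem (.inl false) (by simp)).mul_const _).div
        (measurable_const.add (Finset.measurable_sum _ fun i _ =>
          (hmem (.inr (.inl i)) (by simp)).mul_const _)))
      (((hmem (.inl true) (by simp)).mul_const _).div
        (measurable_const.add (Finset.measurable_sum _ fun i hi =>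
          (hmem (.inr (.inr ⟨i, hi⟩)) (by simp)).mul_const _)))
  rw [← measureReal_def, measureReal_ffr_coverage (by fun_prop) (by fun_prop) hind,
    hP1 _ (le_max_of_le_left hT), hP1 _ hSth, hP3]
  ring

/-- the FFR coverage probability, in the uncorrelated sub-band case, equals
`CP1(max(T,S_th)) + CP3(T) − CP3(T)·CP1(S_th)`. -/
theorem FFR_coverage_probability_uncorrelated
    {Ω : Type*} [MeasurableSpace Ω] (μ : Measure Ω) [IsProbabilityMeasure μ]
    {ι : Type*} [Fintype ι] [Nonempty ι]
    (φ : Finset ι) (hφ : φ.Nonempty)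
    (g ghat : Ω → ℝ) (h hhat : ι → Ω → ℝ)
    (hg_meas : Measurable g) (hghat_meas : Measurable ghat)
    (hh_meas : ∀ i, Measurable (h i)) (hhhat_meas : ∀ i, Measurable (hhat i))
    (hg_exp : Measure.map g μ = expMeasure 1)
    (hghat_exp : Measure.map ghat μ = expMeasure 1)
    (hh_exp : ∀ i, Measure.map (h i) μ = expMeasure 1)
    (hhhat_exp : ∀ i ∈ φ, Measure.map (hhat i) μ = expMeasure 1)
    (h_indep : iIndepFun
      (fun x : Bool ⊕ ι ⊕ {i // i ∈ φ} =>
        Sum.elim (fun b => if b then ghat else g)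
          (Sum.elim h (fun i => hhat i.1)) x) μ)
    (r α N : ℝ) (hr : 0 < r) (hα : 2 ≤ α) (hN : 0 ≤ N)
    (d : ι → ℝ) (hd : ∀ i, 0 < d i)
    (T Sth : ℝ) (hT : 0 ≤ T) (hSth : 0 ≤ Sth) :
    (μ {ω | (Sth < g ω * r ^ (-α) / (N + ∑ i, h i ω * d i ^ (-α)) ∧
               T < g ω * r ^ (-α) / (N + ∑ i, h i ω * d i ^ (-α))) ∨
             (g ω * r ^ (-α) / (N + ∑ i, h i ω * d i ^ (-α)) ≤ Sth ∧
               T < ghat ω * r ^ (-α) / (N + ∑ i ∈ φ, hhat i ω * d i ^ (-α)))}).toReal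
      = CP1 d r α N (max T Sth) + CP3 φ d r α N T
          - CP3 φ d r α N T * CP1 d r α N Sth :=
  FFR_coverage_probability_uncorrelated_general μ φ hφ g ghat h hhat hg_meas hghat_meas hh_meas
    hhhat_meas hg_exp hghat_exp hh_exp hhhat_exp h_indep r α N hr hN d hd T Sth hT hSth
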